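/- For every k ≥ 1, the complete graph on k+1 vertices (which is k-edge-connected) with any choice of destination vertex d admits a (k−1)-resilient set of deterministic routing functions. -/

import Mathlib

open scoped Classical

namespace Srr

/-- A multigraph on vertex type `V` with edge-name type `E`: every edge name is
assigned its (unordered) pair of endpoints; parallel edges are allowed. -/
structure Multigraph (V E : Type) where
  ends : E → Sym2 V

namespace Multigraph

variable {V E : Type}

/-- Walks in a multigraph. -/
inductive Walk (G : Multigraph V E) : V → V → Type
  | nil (v : V) : Walk G v v
  | cons {u v w : V} (e : E) (h : G.ends e = s(u, v)) (p : Walk G v w) : Walk G u w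

namespace Walk

/-- The edges of a walk, in order. -/
def edges {G : Multigraph V E} : ∀ {u v : V}, G.Walk u v → List E
  | _, _, nil _ => []
  | _, _, cons e _ p => e :: edges p

/-- The vertices visited by a walk, in order. -/
def support {G : Multigraph V E} : ∀ {u v : V}, G.Walk u v → List V
  | _, _, nil v => [v]
  | u, _, cons _ _ p => u :: support p

/-- A walk is a path if it visits no vertex twice. -/
def IsPath {G : Multigraph V E} {u v : V} (p : G.Walk u v) : Prop :=
  p.support.Nodup

end Walk

/-- `G` is `k`-edge-connected: between every pair of distinct vertices there
exist `k` pairwise edge-disjoint paths. -/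
def EdgeConnected (G : Multigraph V E) (k : ℕ) : Prop :=
  ∀ u v : V, u ≠ v → ∃ P : Fin k → G.Walk u v,
    (∀ i, (P i).IsPath) ∧
    ∀ i j : Fin k, i ≠ j → ∀ e : E, e ∈ (P i).edges → e ∉ (P j).edges

/-- `s` is still connected to `d` after the edges of `F` have failed. -/
def ConnAvoiding (G : Multigraph V E) (F : Finset E) (s d : V) : Prop :=
  ∃ p : G.Walk s d, ∀ e ∈ p.edges, e ∉ F

/-- The active (non-failed) edges incident to `v`, given the failed set `F`. -/
noncomputable def activeAt [Fintype E] (G : Multigraph V E) (F : Finset E) (v : V) :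
    Finset E :=
  Finset.univ.filter (fun e => v ∈ G.ends e ∧ e ∉ F)

end Multigraph

/-- A static deterministic destination-based set of routing functions: for each
vertex, a map from (incoming edge, `none` if the packet originates there;
set of active incident edges) to a chosen outgoing edge. -/
def Routing (V E : Type) : Type := V → Option E → Finset E → E

/-- Header-rewriting routing functions with a 3-bit (8-valued) header. -/
def HRouting (V E : Type) : Type := V → Option E → Finset E → Fin 8 → E × Fin 8

/-- Duplication routing functions: the output is the set of edges along which
copies of the packet are sent. -/
def DRouting (V E : Type) : Type := V → Option E → Finset E → Finset E

/-- `σ` (the "next" map) describes a circular order on `Fin k`: iterating `σ`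
from any index visits every index. -/
def IsCircularOrder {k : ℕ} (σ : Fin k → Fin k) : Prop :=
  ∀ i j : Fin k, ∃ m : ℕ, σ^[m] i = j

/-- Whether the second component (the arborescence in use) changes between
times `m` and `m+1` of a run. -/
noncomputable def switchAt {α β : Type} (run : ℕ → Option (α × β)) (m : ℕ) : Bool :=
  match run m, run (m + 1) with
  | some p, some q => decide (p.2 ≠ q.2)
  | _, _ => false

/-- The number of switches of the second component during the first `n` steps
of a run. -/
noncomputable def switchCount {α β : Type} (run : ℕ → Option (α × β)) (n : ℕ) : ℕ :=
  ((List.range n).filter (fun m => switchAt run m)).length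

namespace Multigraph

variable {V E : Type} [Fintype V] [Fintype E]

/-- One forwarding step of a packet under routing `f` and failed edge set `F`;
a state is (current vertex, incoming edge or `none`). The step is only
possible when the chosen edge is incident to the current vertex and has not
failed. -/
def RStep (G : Multigraph V E) (f : Routing V E) (F : Finset E)
    (p q : V × Option E) : Prop :=
  ∃ w : V,
    f p.1 p.2 (G.activeAt F p.1) ∉ F ∧
    G.ends (f p.1 p.2 (G.activeAt F p.1)) = s(p.1, w) ∧
    q = (w, some (f p.1 p.2 (G.activeAt F p.1)))

/-- Under failed edges `F`, a packet originated at `s` reaches `d` in finitely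
many steps. -/
def Delivers (G : Multigraph V E) (f : Routing V E) (F : Finset E) (d s : V) : Prop :=
  ∃ i : Option E, Relation.ReflTransGen (G.RStep f F) (s, none) (d, i)

/-- `f` is a `k`-resilient routing towards destination `d`. -/
def Resilient (G : Multigraph V E) (f : Routing V E) (d : V) (k : ℕ) : Prop :=
  ∀ F : Finset E, F.card ≤ k → ∀ s : V, G.ConnAvoiding F s d → G.Delivers f F d s

/-- A `d`-rooted spanning arborescence of the directed copy of `G`: every
vertex `v ≠ d` has exactly one outgoing arc, which goes along the edge
`edge v` towards `parent v`; `d` has no outgoing arc; following `parent`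
from any vertex reaches `d` (hence every vertex has a unique directed path
to `d` in the arborescence). -/
structure Arborescence (G : Multigraph V E) (d : V) where
  parent : V → V
  edge : V → E
  parent_root : parent d = d
  ends_eq : ∀ v : V, v ≠ d → G.ends (edge v) = s(v, parent v)
  reaches_root : ∀ v : V, ∃ n : ℕ, parent^[n] v = d

namespace Arborescence

/-- Two arborescences are arc-disjoint: no directed arc (identified by its
tail vertex together with the underlying edge) lies in both. -/
def ArcDisjoint {G : Multigraph V E} {d : V} (T₁ T₂ : G.Arborescence d) : Prop :=
  ∀ v : V, v ≠ d → T₁.edge v ≠ T₂.edge v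

/-- `T₁` and `T₂` share an edge `{v,w}` of `G` if the arc `(v,w)` is in `T₁`
and the reversed arc `(w,v)` (of the same underlying edge) is in `T₂`. -/
def SharesEdge {G : Multigraph V E} {d : V} (T₁ T₂ : G.Arborescence d) : Prop :=
  ∃ v w : V, v ≠ d ∧ w ≠ d ∧
    T₁.parent v = w ∧ T₂.parent w = v ∧ T₁.edge v = T₂.edge w

/-- The unique directed path in `T` from `u` to `d` contains no failed edge. -/
def GoodFrom {G : Multigraph V E} {d : V} (T : G.Arborescence d)
    (F : Finset E) (u : V) : Prop :=
  ∀ n : ℕ, T.parent^[n] u ≠ d → T.edge (T.parent^[n] u) ∉ F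

end Arborescence

/-- The next arborescence used at vertex `v` when the current one is `i`: the
first arborescence in the circular order (starting with `i` itself) whose
outgoing edge at `v` has not failed, if any. -/
noncomputable def nextIdx (G : Multigraph V E) {k : ℕ} {d : V}
    (T : Fin k → G.Arborescence d) (σ : Fin k → Fin k) (F : Finset E)
    (v : V) (i : Fin k) : Option (Fin k) :=
  ((List.range k).map (fun m => σ^[m] i)).find? (fun j => decide ((T j).edge v ∉ F))

/-- One step of circular-arborescence routing; a state is
(current vertex, current arborescence). -/
noncomputable def caStep (G : Multigraph V E) {k : ℕ} {d : V}
    (T : Fin k → G.Arborescence d) (σ : Fin k → Fin k) (F : Finset E)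
    (p : V × Fin k) : Option (V × Fin k) :=
  if p.1 = d then none
  else (G.nextIdx T σ F p.1 p.2).map (fun j => ((T j).parent p.1, j))

/-- The trajectory of a packet under circular-arborescence routing, starting
at `s` on arborescence `i₀`. -/
noncomputable def caRun (G : Multigraph V E) {k : ℕ} {d : V}
    (T : Fin k → G.Arborescence d) (σ : Fin k → Fin k) (F : Finset E)
    (s : V) (i₀ : Fin k) : ℕ → Option (V × Fin k)
  | 0 => some (s, i₀)
  | n + 1 => (G.caRun T σ F s i₀ n).bind (G.caStep T σ F)

/-- One step of the two-phase routing `R` built from `m+1` arborescences: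
in state `(v, none)` the packet is routed canonically along the last
arborescence `T (Fin.last m)`; when it hits a failed edge `{x,y}` there, it
switches to the circular-arborescence routing on the first `m` arborescences,
starting from the one containing the reversed arc `(y,x)`; states `(v, some i)`
perform this circular routing. -/
noncomputable def rStep2 (G : Multigraph V E) {m : ℕ} {d : V}
    (T : Fin (m + 1) → G.Arborescence d) (σ : Fin m → Fin m) (F : Finset E)
    (p : V × Option (Fin m)) : Option (V × Option (Fin m)) :=
  if p.1 = d then none
  else
    match p.2 with
    | none =>
        if (T (Fin.last m)).edge p.1 ∈ F then
          ((List.finRange m).find? (fun j =>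
              decide ((T j.castSucc).edge ((T (Fin.last m)).parent p.1) =
                  (T (Fin.last m)).edge p.1 ∧
                (T j.castSucc).parent ((T (Fin.last m)).parent p.1) = p.1))).map
            (fun j => (p.1, some j))
        else some ((T (Fin.last m)).parent p.1, none)
    | some i =>
        (G.nextIdx (fun j => T j.castSucc) σ F p.1 i).map
          (fun j => ((T j.castSucc).parent p.1, some j))

/-- The trajectory of a packet under the two-phase routing `R`. -/
noncomputable def rRun2 (G : Multigraph V E) {m : ℕ} {d : V}
    (T : Fin (m + 1) → G.Arborescence d) (σ : Fin m → Fin m) (F : Finset E)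
    (s : V) : ℕ → Option (V × Option (Fin m))
  | 0 => some (s, none)
  | n + 1 => (G.rRun2 T σ F s n).bind (G.rStep2 T σ F)

/-- `π` is a circular ordering of the edges incident to `v`. -/
def IsCircAt (G : Multigraph V E) (v : V) (π : E → E) : Prop :=
  (∀ e : E, v ∈ G.ends e → v ∈ G.ends (π e)) ∧
  (∀ e : E, ¬ v ∈ G.ends e → π e = e) ∧
  (∀ e e' : E, v ∈ G.ends e → v ∈ G.ends e' → ∃ m : ℕ, π^[m] e = e')

/-- The first non-failed edge strictly after `e` in the circular order `π`
among the active edges `A`. -/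
noncomputable def nextCirc (π : E → E) (e : E) (A : Finset E) : Option E :=
  ((List.range (Fintype.card E)).map (fun m => π^[m + 1] e)).find?
    (fun e' => decide (e' ∈ A))

/-- A routing is vertex-circular: every vertex has a circular ordering of its
incident edges, and a packet received along `e` is forwarded through the next
non-failed edge after `e` in this circular order. -/
def IsVertexCircular (G : Multigraph V E) (f : Routing V E) : Prop :=
  ∀ v : V, ∃ π : E → E, G.IsCircAt v π ∧
    ∀ e : E, v ∈ G.ends e → ∀ A : Finset E, ∀ r : E,
      nextCirc π e A = some r → f v (some e) A = r

/-- A routing is vertex-connectivity-resilient: every packet originated at a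
vertex having `k` pairwise edge-disjoint paths to `d` reaches `d` whenever
fewer than `k` edges fail. -/
def VertexConnResilient (G : Multigraph V E) (d : V) (f : Routing V E) : Prop :=
  ∀ v : V, ∀ k : ℕ,
    (∃ P : Fin k → G.Walk v d, (∀ i, (P i).IsPath) ∧
      ∀ i j : Fin k, i ≠ j → ∀ e : E, e ∈ (P i).edges → e ∉ (P j).edges) →
    ∀ F : Finset E, F.card < k → G.Delivers f F d v

/-- One step of header-rewriting routing; a state is
(current vertex, incoming edge, current 3-bit header). -/
def HStep (G : Multigraph V E) (f : HRouting V E) (F : Finset E)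
    (p q : V × Option E × Fin 8) : Prop :=
  ∃ w : V,
    (f p.1 p.2.1 (G.activeAt F p.1) p.2.2).1 ∉ F ∧
    G.ends (f p.1 p.2.1 (G.activeAt F p.1) p.2.2).1 = s(p.1, w) ∧
    q = (w, some (f p.1 p.2.1 (G.activeAt F p.1) p.2.2).1,
         (f p.1 p.2.1 (G.activeAt F p.1) p.2.2).2)

/-- The endpoint of `e` other than `v` (an arbitrary vertex if `e` is not
incident to `v`; `v` itself if `e` is a loop at `v`). -/
noncomputable def otherEnd (G : Multigraph V E) (v : V) (e : E) : V :=
  if h : ∃ w : V, G.ends e = s(v, w) then h.choose else v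

/-- The copies produced from packet state `p` in one step of duplication
routing: one copy along each chosen non-failed incident edge; no copies once
the packet is at `d`. -/
noncomputable def dchildren (G : Multigraph V E) (f : DRouting V E) (F : Finset E)
    (d : V) (p : V × Option E) : Multiset (V × Option E) :=
  if p.1 = d then 0
  else ((f p.1 p.2 (G.activeAt F p.1) ∩ G.activeAt F p.1).val.map
      (fun e => (G.otherEnd p.1 e, some e)))

/-- The multiset of packet-copy states after `n` steps of duplication routing
of a packet originated at `s`. -/
noncomputable def dlevel (G : Multigraph V E) (f : DRouting V E) (F : Finset E)
    (d : V) (s : V) : ℕ → Multiset (V × Option E)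
  | 0 => {(s, none)}
  | n + 1 => (G.dlevel f F d s n).bind (G.dchildren f F d)

/-- The total number of new copies of the packet created during the first `N`
steps of duplication routing. -/
noncomputable def dcreated (G : Multigraph V E) (f : DRouting V E) (F : Finset E)
    (d : V) (s : V) (N : ℕ) : ℕ :=
  ∑ n ∈ Finset.range N,
    ((G.dlevel f F d s n).map (fun p => (G.dchildren f F d p).card - 1)).sum

/-- Two vertices are joined by a walk in the multigraph. -/
def Reach (G : Multigraph V E) : V → V → Prop :=
  Relation.ReflTransGen (fun u v => ∃ e : E, G.ends e = s(u, v))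

/-- The connected component of `v`. -/
noncomputable def compOf (G : Multigraph V E) (v : V) : Finset V :=
  Finset.univ.filter (fun w => G.Reach v w)

/-- The edges with all endpoints inside `S`. -/
noncomputable def edgesIn (G : Multigraph V E) (S : Finset V) : Finset E :=
  Finset.univ.filter (fun e => ∀ x ∈ G.ends e, x ∈ S)

/-- A set of vertices forms a tree component: it is connected, carries no
self-loop, and the number of its edges is its number of vertices minus one. -/
def IsTreeComp (G : Multigraph V E) (S : Finset V) : Prop :=
  (∀ u ∈ S, ∀ w ∈ S, G.Reach u w) ∧
  (∀ e ∈ G.edgesIn S, ¬ (G.ends e).IsDiag) ∧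
  (G.edgesIn S).card = S.card - 1

end Multigraph

/-- The multigraph associated with a simple graph: the edge names are the
edges of the simple graph. -/
def toMG {W : Type} (G : SimpleGraph W) : Multigraph W G.edgeSet :=
  ⟨fun e => (e : Sym2 W)⟩

/-- A simple graph is planar: it has an embedding in the plane. Vertices are
mapped to distinct points, every edge to a simple continuous arc between the
images of its endpoints, arcs pass through no other vertex, and two distinct
arcs may only meet at images of vertices (hence only at shared endpoints). -/
def IsPlanar {W : Type} (G : SimpleGraph W) : Prop :=
  ∃ (p : W → ℝ × ℝ) (arc : W → W → Set (ℝ × ℝ)),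
    Function.Injective p ∧
    (∀ u v : W, arc u v = arc v u) ∧
    (∀ u v : W, G.Adj u v → ∃ γ : ℝ → ℝ × ℝ,
      ContinuousOn γ (Set.Icc 0 1) ∧ Set.InjOn γ (Set.Icc 0 1) ∧
      γ 0 = p u ∧ γ 1 = p v ∧ arc u v = γ '' Set.Icc 0 1) ∧
    (∀ u v w : W, G.Adj u v → p w ∈ arc u v → w = u ∨ w = v) ∧
    (∀ u v x y : W, G.Adj u v → G.Adj x y → s(u, v) ≠ s(x, y) →
      arc u v ∩ arc x y ⊆ Set.range p)

end Srr

/-! At a vertex `v ≠ d` the routing forwards the packet to `d` if that edge is alive, and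
otherwise to the first vertex after `v` in the cyclic order of `Fin (k + 1)`, skipping `d`,
that `v` reaches by a live edge. The incoming edge is ignored, so the packet follows the orbit
of a vertex map `g`. If that orbit `O` missed `d`, every `v ∈ O` would have a failed edge to `d`
and every `w ∉ O ∪ {d}` a failed edge to the last vertex of `O` before it, since `g` jumped over
`w` from there. These `k` failed edges are distinct, but at most `k - 1` edges fail. -/

theorem Fin.val_sub_lt_val_sub {m : ℕ} [NeZero m] {a b c : Fin m} (hab : a ≠ b)
    (h : (b - a).val ≤ (c - a).val) : (c - b).val < (c - a).val := by
  have hpos : 0 < (b - a).val := Fin.pos_iff_ne_zero.mpr (sub_ne_zero.mpr hab.symm)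
  rw [← sub_sub_sub_cancel_right c b a, Fin.sub_val_of_le (Fin.le_def.mpr h)]
  omega

namespace Srr

open Finset Function

section CyclicFirstFit

variable {n : ℕ}

lemma exists_pair_notMem_of_card_lt {S : Finset (Sym2 (Fin (n + 1)))} (hS : #S < n)
    (v : Fin (n + 1)) : ∃ w, w ≠ v ∧ s(v, w) ∉ S := by
  by_contra! h
  have : #(univ.erase v) ≤ #S :=
    card_le_card_of_injOn (fun w => s(v, w)) (fun w hw => h w (ne_of_mem_erase hw))
      (fun w _ w' _ hww' => Sym2.congr_right.mp hww')
  simp only [card_erase_of_mem (mem_univ v), card_univ, Fintype.card_fin,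
    add_tsub_cancel_right] at this
  omega

/-- `(w - v).val` is how far `w` lies after `v` in the cyclic order of `Fin (n + 1)`. -/
def IsCyclicFirstFit (S : Finset (Sym2 (Fin (n + 1)))) (d : Fin (n + 1))
    (g : Fin (n + 1) → Fin (n + 1)) : Prop :=
  ∀ v, v ≠ d → g v ≠ d → s(v, d) ∈ S ∧ g v ≠ v ∧
    ∀ w, w ≠ d → w ≠ v → (w - v).val < (g v - v).val → s(v, w) ∈ S

namespace IsCyclicFirstFit

variable {S : Finset (Sym2 (Fin (n + 1)))} {d : Fin (n + 1)} {g : Fin (n + 1) → Fin (n + 1)}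
  {O : Finset (Fin (n + 1))}

/-- As `g v ∈ O` cannot lie between `v` and `w`, the map `g` jumps over `w` at `v`. -/
lemma pair_mem_of_nearest (hg : IsCyclicFirstFit S d g) (hgO : ∀ v ∈ O, g v ∈ O)
    (hdO : d ∉ O) {v w : Fin (n + 1)} (hv : v ∈ O) (hw : w ∉ O) (hwd : w ≠ d)
    (hnear : ∀ u ∈ O, (w - v).val ≤ (w - u).val) : s(v, w) ∈ S := by
  have hgv := hgO v hv
  obtain ⟨-, hgvv, hskip⟩ := hg v (ne_of_mem_of_not_mem hv hdO)
    (ne_of_mem_of_not_mem hgv hdO)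
  refine hskip w hwd (ne_of_mem_of_not_mem hv hw).symm (not_le.mp fun hle => ?_)
  exact (Fin.val_sub_lt_val_sub hgvv.symm hle).not_ge (hnear _ hgv)

/-- `w ↦ {w, d}` on `O` and `w ↦ {v, w}` off `O`, with `v` the last vertex of `O` before `w`,
injects the `n` vertices `w ≠ d` into `S`. -/
lemma le_card (hg : IsCyclicFirstFit S d g) (hO : O.Nonempty) (hgO : ∀ v ∈ O, g v ∈ O)
    (hdO : d ∉ O) : n ≤ #S := by
  choose c hcO hnear using fun w : Fin (n + 1) => O.exists_min_image (fun u => (w - u).val) hO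
  set partner : Fin (n + 1) → Fin (n + 1) := fun w => if w ∈ O then d else c w
  have hpartner : ∀ w ∉ O, partner w ∈ O := fun w hw => by simp only [partner, if_neg hw, hcO]
  have hmaps : ∀ w ∈ univ.erase d, s(partner w, w) ∈ S := by
    intro w hw
    have hwd := ne_of_mem_erase hw
    by_cases hwO : w ∈ O
    · simpa only [partner, if_pos hwO, Sym2.eq_swap] using
        (hg w hwd (ne_of_mem_of_not_mem (hgO w hwO) hdO)).1
    · simpa only [partner, if_neg hwO] using
        hg.pair_mem_of_nearest hgO hdO (hcO w) hwO hwd (hnear w)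
  have hinj : Set.InjOn (fun w => s(partner w, w)) (univ.erase d : Finset _) := by
    intro w hw w' hw' h
    rcases Sym2.eq_iff.mp h with ⟨-, rfl⟩ | ⟨hww', hw'w⟩
    · rfl
    by_cases hwO : w ∈ O
    · simp only [partner, if_pos hwO] at hww'
      exact absurd hww'.symm (ne_of_mem_erase (mem_coe.mp hw'))
    · have := hww' ▸ hpartner w hwO
      simp only [partner, if_pos this] at hw'w
      exact absurd hw'w (ne_of_mem_erase (mem_coe.mp hw))
  have := card_le_card_of_injOn _ hmaps hinj
  simpa only [card_erase_of_mem (mem_univ d), card_univ, Fintype.card_fin,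
    add_tsub_cancel_right] using this

theorem exists_iterate_eq (hg : IsCyclicFirstFit S d g) (hS : #S < n) (s : Fin (n + 1)) :
    ∃ m, g^[m] s = d := by
  by_contra! hne
  let O := univ.filter fun w => ∃ m, g^[m] s = w
  have hgO : ∀ v ∈ O, g v ∈ O := by
    simp only [O, mem_filter, mem_univ, true_and]
    rintro _ ⟨m, rfl⟩
    exact ⟨m + 1, iterate_succ_apply' g m s⟩
  have hdO : d ∉ O := by
    simp only [O, mem_filter, mem_univ, true_and, not_exists]
    exact hne
  have hsO : s ∈ O := by
    simp only [O, mem_filter, mem_univ, true_and]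
    exact ⟨0, rfl⟩
  exact hS.not_ge (hg.le_card ⟨s, hsO⟩ hgO hdO)

end IsCyclicFirstFit

end CyclicFirstFit

lemma Multigraph.mem_activeAt {V E : Type} [Fintype E] {G : Multigraph V E} {F : Finset E}
    {v : V} {e : E} : e ∈ G.activeAt F v ↔ v ∈ G.ends e ∧ e ∉ F := by
  simp [activeAt]

section CompleteGraph

variable {V : Type} [DecidableEq V]

noncomputable def topEdge [Nonempty (⊤ : SimpleGraph V).edgeSet] (v w : V) :
    (⊤ : SimpleGraph V).edgeSet :=
  if h : v ≠ w then ⟨s(v, w), by simpa using h⟩ else Classical.arbitrary _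

variable [Nonempty (⊤ : SimpleGraph V).edgeSet] {v w : V}

lemma coe_topEdge (h : v ≠ w) : (topEdge v w : Sym2 V) = s(v, w) := by
  simp [topEdge, h]

lemma topEdge_mem_activeAt_iff [Fintype V] {F : Finset (⊤ : SimpleGraph V).edgeSet}
    (h : v ≠ w) :
    topEdge v w ∈ (toMG (⊤ : SimpleGraph V)).activeAt F v ↔ topEdge v w ∉ F := by
  simp [Multigraph.mem_activeAt, toMG, coe_topEdge h]

lemma pair_mem_map_subtype_iff {F : Finset (⊤ : SimpleGraph V).edgeSet} (h : v ≠ w) :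
    s(v, w) ∈ F.map (Embedding.subtype _) ↔ topEdge v w ∈ F := by
  rw [← coe_topEdge h]
  exact mem_map' (Embedding.subtype _)

end CompleteGraph

lemma Multigraph.delivers_of_iterate_eq {V E : Type} [Fintype E] {G : Multigraph V E}
    {f : Routing V E} {F : Finset E} {d : V} (g : V → V)
    (hstep : ∀ v o, v ≠ d → ∃ o', G.RStep f F (v, o) (g v, o')) {s : V} {m : ℕ}
    (hm : g^[m] s = d) : G.Delivers f F d s := by
  suffices ∀ m v o, g^[m] v = d → ∃ i, Relation.ReflTransGen (G.RStep f F) (v, o) (d, i) from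
    this m s none hm
  intro m
  induction m with
  | zero => rintro v o rfl; exact ⟨o, .refl⟩
  | succ m ih =>
    intro v o hv
    by_cases hvd : v = d
    · exact ⟨o, hvd ▸ .refl⟩
    obtain ⟨o', hvo'⟩ := hstep v o hvd
    obtain ⟨i, hi⟩ := ih (g v) o' hv
    exact ⟨i, .head hvo' hi⟩

section CyclicRouting

variable {n : ℕ}

def hopPriority (d v w : Fin (n + 1)) : ℕ := if w = d then 0 else (w - v).val

variable [Nonempty (⊤ : SimpleGraph (Fin (n + 1))).edgeSet]

noncomputable def nextHop (d v : Fin (n + 1))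
    (A : Finset (⊤ : SimpleGraph (Fin (n + 1))).edgeSet) : Fin (n + 1) :=
  if h : {w | w ≠ v ∧ topEdge v w ∈ A}.Nonempty then argminOn (hopPriority d v) _ h else v

noncomputable def cyclicRouting (d : Fin (n + 1)) :
    Routing (Fin (n + 1)) (⊤ : SimpleGraph (Fin (n + 1))).edgeSet :=
  fun v _ A => topEdge v (nextHop d v A)

variable {d v w : Fin (n + 1)}

lemma nextHop_spec {A : Finset (⊤ : SimpleGraph (Fin (n + 1))).edgeSet}
    (hw : w ≠ v ∧ topEdge v w ∈ A) :
    (nextHop d v A ≠ v ∧ topEdge v (nextHop d v A) ∈ A) ∧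
      hopPriority d v (nextHop d v A) ≤ hopPriority d v w := by
  rw [nextHop, dif_pos ⟨w, hw⟩]
  let C := {w | w ≠ v ∧ topEdge v w ∈ A}
  exact ⟨argminOn_mem (hopPriority d v) C ⟨w, hw⟩, argminOn_le (hopPriority d v) C hw⟩

variable {F : Finset (⊤ : SimpleGraph (Fin (n + 1))).edgeSet}

lemma exists_topEdge_mem_activeAt (hF : #F < n) (v : Fin (n + 1)) :
    ∃ w, w ≠ v ∧ topEdge v w ∈ (toMG ⊤).activeAt F v := by
  obtain ⟨w, hwv, hw⟩ :=
    exists_pair_notMem_of_card_lt (S := F.map (Embedding.subtype _)) (by rwa [card_map]) v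
  rw [pair_mem_map_subtype_iff hwv.symm] at hw
  exact ⟨w, hwv, (topEdge_mem_activeAt_iff hwv.symm).mpr hw⟩

lemma nextHop_activeAt_ne_and_notMem (hF : #F < n) (v : Fin (n + 1)) :
    nextHop d v ((toMG ⊤).activeAt F v) ≠ v ∧
      topEdge v (nextHop d v ((toMG ⊤).activeAt F v)) ∉ F := by
  obtain ⟨w, hw⟩ := exists_topEdge_mem_activeAt hF v
  obtain ⟨⟨htv, htA⟩, -⟩ := nextHop_spec (d := d) hw
  exact ⟨htv, (topEdge_mem_activeAt_iff htv.symm).mp htA⟩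

lemma rStep_cyclicRouting (hF : #F < n) (v : Fin (n + 1)) (o : Option _) :
    (toMG ⊤).RStep (cyclicRouting d) F (v, o)
      (nextHop d v ((toMG ⊤).activeAt F v),
        some (cyclicRouting d v o ((toMG ⊤).activeAt F v))) :=
  have ⟨htv, htF⟩ := nextHop_activeAt_ne_and_notMem (d := d) hF v
  ⟨_, htF, coe_topEdge htv.symm, rfl⟩

lemma isCyclicFirstFit_nextHop (hF : #F < n) :
    IsCyclicFirstFit (F.map (Embedding.subtype _)) d
      (fun v => nextHop d v ((toMG ⊤).activeAt F v)) := by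
  intro v hvd htd
  dsimp only at htd ⊢
  have htv := (nextHop_activeAt_ne_and_notMem (d := d) hF v).1
  have hnear : ∀ w, w ≠ v → topEdge v w ∉ F →
      (nextHop d v ((toMG ⊤).activeAt F v) - v).val ≤ hopPriority d v w := fun w hwv hwF => by
    simpa only [hopPriority, if_neg htd] using
      (nextHop_spec (d := d) ⟨hwv, (topEdge_mem_activeAt_iff hwv.symm).mpr hwF⟩).2
  refine ⟨?_, htv, fun w hwd hwv hlt => ?_⟩
  · rw [pair_mem_map_subtype_iff hvd]
    by_contra hdF
    have := hnear d hvd.symm hdF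
    simp only [hopPriority, if_pos, nonpos_iff_eq_zero, Fin.val_eq_zero_iff, sub_eq_zero] at this
    exact htv this
  · rw [pair_mem_map_subtype_iff hwv.symm]
    by_contra hwF
    have := hnear w hwv hwF
    simp only [hopPriority, if_neg hwd] at this
    omega

end CyclicRouting

/-- For every `k ≥ 1`, the complete graph on `k+1` vertices, with any
destination `d`, admits a `(k-1)`-resilient set of deterministic routing
functions. -/
theorem statement_8 (k : ℕ) (hk : 1 ≤ k) (d : Fin (k + 1)) :
    ∃ f : Routing (Fin (k + 1)) (⊤ : SimpleGraph (Fin (k + 1))).edgeSet,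
      (toMG (⊤ : SimpleGraph (Fin (k + 1)))).Resilient f d (k - 1) := by
  have : Nonempty (⊤ : SimpleGraph (Fin (k + 1))).edgeSet :=
    ⟨⟨s(0, Fin.last k), by simp [Fin.ext_iff]; omega⟩⟩
  refine ⟨cyclicRouting d, fun F hF s _ => ?_⟩
  have hF' : #F < k := by omega
  obtain ⟨m, hm⟩ := (isCyclicFirstFit_nextHop hF').exists_iterate_eq (by rwa [card_map]) s
  exact Multigraph.delivers_of_iterate_eq _ (fun v o _ => ⟨_, rStep_cyclicRouting hF' v o⟩) hm

end Srr
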